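/- Let m, c be real numbers with m > 0 and 0 < c < m. Define c₀ = (m² + 2m)/2, c₁ = (2 − m)/2, a₀ = −(c³ + 3c²)/6, a₁ = (c² − c)/2, b₀ = (2m³ + 3m²)/6, b₁ = m/2, F(α) = a₀c₁ − a₁c₀, F(β) = b₀c₁ − b₁c₀, ⟨α,β⟩ = −(c⁴ + 2c³)/12 − a₀b₀/c₀, and ⟨β,β⟩ = (3m⁴ + 4m³)/12 − b₀²/c₀. Then ⟨β,β⟩ ≠ 0 and F(α) − (⟨α,β⟩/⟨β,β⟩)·F(β) = [c(m − c)(m + 2)/(4(m² + 6m + 6))]·[(2m + 2)c² − (m² − 4m − 6)c + m² + 6m + 6]. -/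
import Mathlib


/-- The closed formula for the modified Futaki invariant
`F_χ(α) = F(α) − (⟨α,β⟩/⟨β,β⟩)·F(β)` of the deformation to the normal cone of the
infinity section of the ruled surface, with parameter `c ∈ (0, m)`. -/
theorem modified_futaki_closed_formula (m c : ℝ) (hm : 0 < m) (hc0 : 0 < c) (hcm : c < m)
    (c₀ c₁ a₀ a₁ b₀ b₁ Fα Fβ ipαβ ipββ : ℝ)
    (hc₀ : c₀ = (m ^ 2 + 2 * m) / 2) (hc₁ : c₁ = (2 - m) / 2)
    (ha₀ : a₀ = -(c ^ 3 + 3 * c ^ 2) / 6) (ha₁ : a₁ = (c ^ 2 - c) / 2)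
    (hb₀ : b₀ = (2 * m ^ 3 + 3 * m ^ 2) / 6) (hb₁ : b₁ = m / 2)
    (hFα : Fα = a₀ * c₁ - a₁ * c₀) (hFβ : Fβ = b₀ * c₁ - b₁ * c₀)
    (hipαβ : ipαβ = -(c ^ 4 + 2 * c ^ 3) / 12 - a₀ * b₀ / c₀)
    (hipββ : ipββ = (3 * m ^ 4 + 4 * m ^ 3) / 12 - b₀ ^ 2 / c₀) :
    ipββ ≠ 0 ∧
      Fα - (ipαβ / ipββ) * Fβ =
        c * (m - c) * (m + 2) / (4 * (m ^ 2 + 6 * m + 6)) *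
          ((2 * m + 2) * c ^ 2 - (m ^ 2 - 4 * m - 6) * c + (m ^ 2 + 6 * m + 6)) := by
  have hm2 : (0:ℝ) < m + 2 := by linarith
  have hq : (0:ℝ) < m ^ 2 + 6 * m + 6 := by nlinarith
  have hc₀ne : c₀ ≠ 0 := by
    rw [hc₀]; positivity
  have hββ : ipββ = m ^ 3 * (m ^ 2 + 6 * m + 6) / (36 * (m + 2)) := by
    rw [hipββ, hb₀, hc₀]
    field_simp
    ring
  have hne : ipββ ≠ 0 := by
    rw [hββ]; positivity
  refine ⟨hne, ?_⟩
  rw [hFα, hFβ, hipαβ, ha₀, ha₁, hb₀, hb₁, hc₀, hc₁, hββ]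
  have h36 : (36 : ℝ) * (m + 2) ≠ 0 := by positivity
  field_simp
  ring
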